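/- arXiv:1502.05433 — 2 statements merged into one kernel-verified Lean document; each statement's English description precedes it below -/
import Mathlib

section
/- Let R_1, …, R_K be M×M complex Hermitian positive semidefinite matrices, let c > 0, and let π : {1,…,K} → {1,…,τ′} be a pilot assignment; set C_{π_k} = Σ_{ℓ : π_ℓ = π_k} R_ℓ + c·I. Suppose that trace(R_i·R_j) = 0 for all i ≠ j with π_i = π_j. Then for all i ≠ j with π_i = π_j one has R_i·C_{π_i}⁻¹·R_j = 0; that is, the cross-covariance −R_i·C_{π_i}⁻¹·R_j of the channel estimation errors of any two users reusing the same pilot vanishes. -/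
/-!
Write `R_i = aᴴa` and `R_j = bᴴb`. Then `trace (R_i R_j) = trace ((a bᴴ)ᴴ (a bᴴ))`, so orthogonality
forces `a bᴴ = 0` and hence `R_i R_j = 0`. Consequently `R_i` annihilates every other summand of
`C_{π_i}`, which gives `R_i C_{π_i} = (R_i + c I) R_i`; inverting both positive definite factors,
`R_i C_{π_i}⁻¹ R_j = (R_i + c I)⁻¹ R_i R_j = 0`.
-/

open scoped ComplexOrder MatrixOrder
open Matrix

theorem semiconjBy_sum_add_of_mul_eq_zero {ι R : Type*} [Semiring R] {s : Finset ι}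
    {f : ι → R} {i : ι} {z : R} (hi : i ∈ s) (hf : ∀ j ∈ s, j ≠ i → f i * f j = 0)
    (hz : Commute (f i) z) : SemiconjBy (f i) (∑ j ∈ s, f j + z) (f i + z) := by
  rw [SemiconjBy, mul_add, add_mul, Finset.mul_sum, Finset.sum_eq_single_of_mem i hi hf, hz.eq]

namespace Matrix

theorem SemiconjBy.inv_right {n R : Type*} [Fintype n] [DecidableEq n] [CommRing R]
    {A X Y : Matrix n n R} (hX : IsUnit X.det) (hY : IsUnit Y.det) (h : SemiconjBy A X Y) :
    SemiconjBy A X⁻¹ Y⁻¹ := by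
  simpa only [zpow_neg_one] using SemiconjBy.zpow_right hX hY h (-1)

theorem PosSemidef.mul_eq_zero_of_trace_mul_eq_zero {n 𝕜 : Type*} [Fintype n] [RCLike 𝕜]
    {A B : Matrix n n 𝕜} (hA : A.PosSemidef) (hB : B.PosSemidef) (h : (A * B).trace = 0) :
    A * B = 0 := by
  classical
  obtain ⟨a, rfl⟩ := CStarAlgebra.nonneg_iff_eq_star_mul_self.mp hA.nonneg
  obtain ⟨b, rfl⟩ := CStarAlgebra.nonneg_iff_eq_star_mul_self.mp hB.nonneg
  simp only [star_eq_conjTranspose] at h ⊢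
  have hab : a * bᴴ = 0 := by
    rw [← trace_conjTranspose_mul_self_eq_zero_iff, ← h, conjTranspose_mul,
      conjTranspose_conjTranspose, Matrix.mul_assoc, trace_mul_comm]
    simp only [Matrix.mul_assoc]
  rw [Matrix.mul_assoc, ← Matrix.mul_assoc a, hab, Matrix.zero_mul, Matrix.mul_zero]

end Matrix

/-- If `trace (R i * R j) = 0` for all `i ≠ j` reusing the same pilot, then the
cross-covariance `R i * (C (π i))⁻¹ * R j` of the channel estimation errors of any two
users `i ≠ j` with `π i = π j` vanishes, where `C (π k) = ∑_{ℓ : π ℓ = π k} R ℓ + c • I`. -/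
theorem cross_covariance_eq_zero_of_orthogonal
    {M K τ' : ℕ} (R : Fin K → Matrix (Fin M) (Fin M) ℂ)
    (hR : ∀ k, (R k).PosSemidef)
    (c : ℝ) (hc : 0 < c)
    (π : Fin K → Fin τ')
    (C : Fin K → Matrix (Fin M) (Fin M) ℂ)
    (hC : ∀ k, C k = ∑ ℓ ∈ Finset.univ.filter (fun ℓ => π ℓ = π k), R ℓ +
      (c : ℂ) • (1 : Matrix (Fin M) (Fin M) ℂ))
    (horth : ∀ i j : Fin K, i ≠ j → π i = π j → (R i * R j).trace = 0) :
    ∀ i j : Fin K, i ≠ j → π i = π j → R i * (C i)⁻¹ * R j = 0 := by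
  intro i j hij hπ
  have hRR : ∀ k ℓ, k ≠ ℓ → π k = π ℓ → R k * R ℓ = 0 := fun k ℓ hkℓ hπkℓ =>
    (hR k).mul_eq_zero_of_trace_mul_eq_zero (hR ℓ) (horth k ℓ hkℓ hπkℓ)
  have hcI : ((c : ℂ) • (1 : Matrix (Fin M) (Fin M) ℂ)).PosDef :=
    PosDef.one.smul (Complex.zero_lt_real.mpr hc)
  have hCi : (C i).PosDef := hC i ▸ .posSemidef_add (posSemidef_sum _ fun ℓ _ => hR ℓ) hcI
  have hRi : (R i + (c : ℂ) • 1).PosDef := .posSemidef_add (hR i) hcI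
  have hsemi : SemiconjBy (R i) (C i) (R i + (c : ℂ) • 1) :=
    hC i ▸ semiconjBy_sum_add_of_mul_eq_zero (by simp)
      (fun ℓ hℓ hℓi => hRR i ℓ hℓi.symm (Finset.mem_filter.mp hℓ).2.symm)
      ((Commute.one_right _).smul_right _)
  have hsemi_inv := Matrix.SemiconjBy.inv_right ((isUnit_iff_isUnit_det _).mp hCi.isUnit)
    ((isUnit_iff_isUnit_det _).mp hRi.isUnit) hsemi
  calc R i * (C i)⁻¹ * R j = (R i + (c : ℂ) • 1)⁻¹ * (R i * R j) := by
        rw [hsemi_inv.eq, Matrix.mul_assoc]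
    _ = 0 := by rw [hRR i j hij hπ, Matrix.mul_zero]
end

section
/- (Corollary 2, UL–DL MMSE duality) Let Ĝ be a nonzero M×K complex matrix, let R̃ be an M×M complex Hermitian positive semidefinite matrix, and let ρ > 0; set D = R̃ + (1/ρ)·I_M, C = Ĝ·Ĝᴴ + D, and γ = √(trace(Ĝᴴ·C⁻²·Ĝ)/K). Then the optimal uplink receiver W_opt = (C⁻¹·Ĝ)* and the optimal downlink precoder B_opt = (1/γ)·(C⁻¹·Ĝ)* satisfy B_opt = W_opt/γ, and the minimum uplink MSE-SD min_W Re trace(Wᵀ·C·W* + I_K − Wᵀ·Ĝ − Ĝᴴ·W*) equals the minimum downlink MSE-SD min_{(B,α): trace(BBᴴ)≤K, α∈ℝ} [Re trace(α²·Bᴴ·(Ĝ*·Ĝᵀ + R̃*)·B − α·Ĝᵀ·B − α·Bᴴ·Ĝ*) + (α²/ρ + 1)·K], both being equal to trace((I_K + Ĝᴴ·D⁻¹·Ĝ)⁻¹). -/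
/-!
Completing the square,
`Vᴴ C V + I - Vᴴ Ĝ - Ĝᴴ V = (V - C⁻¹ Ĝ)ᴴ C (V - C⁻¹ Ĝ) + (I - Ĝᴴ C⁻¹ Ĝ)`; as `C` is positive
definite, the uplink MSE, a function of `V = W*`, is minimised at `V = C⁻¹ Ĝ` with value
`tr (I - Ĝᴴ C⁻¹ Ĝ)`, which is `tr ((I + Ĝᴴ D⁻¹ Ĝ)⁻¹)` by the Woodbury identity.
Taking entrywise conjugates, the downlink MSE of `(B, α)` is the uplink MSE at `W = α B` plus
`(α² / ρ) (K - tr (B Bᴴ))`, which is nonnegative under the power constraint. The scaling by `γ`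
makes `Bopt` meet the constraint with equality and `γ Bopt = Wopt`, so `(Bopt, γ)` attains the
uplink minimum.
-/

open scoped ComplexOrder
open Matrix

/-- Entrywise complex conjugate of a matrix. -/
def mconj {m n : Type*} (A : Matrix m n ℂ) : Matrix m n ℂ := A.map (starRingEnd ℂ)

section mconj

variable {m n p : Type*}

lemma mconj_eq_conjTranspose_transpose (A : Matrix m n ℂ) : mconj A = Aᴴᵀ := rfl

@[simp] lemma mconj_mconj (A : Matrix m n ℂ) : mconj (mconj A) = A := by
  ext; simp [mconj]

@[simp] lemma conjTranspose_mconj (A : Matrix m n ℂ) : (mconj A)ᴴ = Aᵀ := by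
  ext; simp [mconj]

@[simp] lemma mconj_transpose (A : Matrix m n ℂ) : mconj Aᵀ = Aᴴ := by
  ext; simp [mconj]

@[simp] lemma mconj_conjTranspose (A : Matrix m n ℂ) : mconj Aᴴ = Aᵀ := by
  simp [mconj_eq_conjTranspose_transpose]

@[simp] lemma mconj_add (A B : Matrix m n ℂ) : mconj (A + B) = mconj A + mconj B := by
  simp [mconj_eq_conjTranspose_transpose]

@[simp] lemma mconj_sub (A B : Matrix m n ℂ) : mconj (A - B) = mconj A - mconj B := by
  simp [mconj_eq_conjTranspose_transpose]

@[simp] lemma mconj_real_smul (r : ℝ) (A : Matrix m n ℂ) : mconj (r • A) = r • mconj A := by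
  ext; simp [mconj, Complex.real_smul]

@[simp] lemma mconj_mul [Fintype n] (A : Matrix m n ℂ) (B : Matrix n p ℂ) :
    mconj (A * B) = mconj A * mconj B := by
  simp [mconj_eq_conjTranspose_transpose, transpose_mul, conjTranspose_mul]

lemma trace_mconj [Fintype n] (A : Matrix n n ℂ) : (mconj A).trace = starRingEnd ℂ A.trace := by
  simp [trace, mconj]

@[simp] lemma re_trace_mconj [Fintype n] (A : Matrix n n ℂ) : (mconj A).trace.re = A.trace.re := by
  rw [trace_mconj, Complex.conj_re]

end mconj

section frobenius

variable {m n : Type*} [Fintype m] [Fintype n]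

lemma trace_conjTranspose_mul_self_eq_ofReal (X : Matrix m n ℂ) :
    (Xᴴ * X).trace = (Xᴴ * X).trace.re :=
  Complex.eq_re_of_ofReal_le (r := 0) <| by
    exact_mod_cast (posSemidef_conjTranspose_mul_self X).trace_nonneg

lemma re_trace_conjTranspose_mul_self_pos {X : Matrix m n ℂ} (hX : X ≠ 0) :
    0 < (Xᴴ * X).trace.re := by
  have hpos : 0 < (Xᴴ * X).trace :=
    (posSemidef_conjTranspose_mul_self X).trace_nonneg.lt_of_ne'
      (trace_conjTranspose_mul_self_eq_zero_iff.not.mpr hX)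
  simpa using (Complex.lt_def.mp hpos).1

lemma trace_mul_conjTranspose_self_eq_ofReal (X : Matrix m n ℂ) :
    (X * Xᴴ).trace = (X * Xᴴ).trace.re := by
  simpa using trace_conjTranspose_mul_self_eq_ofReal Xᴴ

lemma re_trace_conjTranspose_mul_self_smul_mconj (c : ℝ) (X : Matrix m n ℂ) :
    ((c • mconj X)ᴴ * (c • mconj X)).trace.re = c ^ 2 * (Xᴴ * X).trace.re := by
  have h : (c • mconj X)ᴴ * (c • mconj X) = (c ^ 2) • mconj (Xᴴ * X) := by
    simp [conjTranspose_smul, smul_smul, sq]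
  rw [h, trace_smul, Complex.smul_re, re_trace_mconj, smul_eq_mul]

lemma re_trace_mul_conjTranspose_of_normalized {X : Matrix m n ℂ} (hX : X ≠ 0) {k γ : ℝ}
    (hk : 0 < k) (hγ : γ = √((Xᴴ * X).trace.re / k)) :
    ((γ⁻¹ • mconj X) * (γ⁻¹ • mconj X)ᴴ).trace.re = k := by
  have hX := re_trace_conjTranspose_mul_self_pos hX
  rw [trace_mul_comm, re_trace_conjTranspose_mul_self_smul_mconj, inv_pow, hγ,
    Real.sq_sqrt (div_pos hX hk).le]
  field_simp

end frobenius

lemma inv_one_add_mul_inv_mul {R m n : Type*} [CommRing R] [Fintype m] [DecidableEq m]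
    [Fintype n] [DecidableEq n] (H : Matrix n m R) (G : Matrix m n R) {D : Matrix m m R}
    (hD : IsUnit D) (hC : IsUnit (G * H + D)) :
    (1 + H * D⁻¹ * G)⁻¹ = 1 - H * (G * H + D)⁻¹ * G := by
  have hDD : D⁻¹⁻¹ = D := nonsing_inv_nonsing_inv D ((isUnit_iff_isUnit_det D).mp hD)
  have hW := add_mul_mul_inv_eq_sub 1 H D⁻¹ G isUnit_one (isUnit_nonsing_inv_iff.mpr hD)
    (by simpa [hDD, add_comm] using hC)
  simpa [hDD, add_comm] using hW

section mse

variable {m n : Type*} [Fintype m] [Fintype n] [DecidableEq n]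

def mseUplink (C : Matrix m m ℂ) (G V : Matrix m n ℂ) : ℝ :=
  (Vᴴ * C * V + 1 - Vᴴ * G - Gᴴ * V).trace.re

lemma mseUplink_eq_of_isHermitian [DecidableEq m] {C : Matrix m m ℂ} (hC : C.IsHermitian)
    (hdet : IsUnit C.det) (G V : Matrix m n ℂ) :
    mseUplink C G V =
      ((V - C⁻¹ * G)ᴴ * C * (V - C⁻¹ * G)).trace.re + (1 - Gᴴ * C⁻¹ * G).trace.re := by
  have hsq : (V - C⁻¹ * G)ᴴ * C * (V - C⁻¹ * G)
      = Vᴴ * C * V - Vᴴ * G - Gᴴ * V + Gᴴ * C⁻¹ * G := by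
    rw [conjTranspose_sub, conjTranspose_mul, hC.inv.eq]
    simp only [Matrix.sub_mul, Matrix.mul_sub, Matrix.mul_assoc,
      mul_nonsing_inv_cancel_left _ _ hdet, nonsing_inv_mul_cancel_left _ _ hdet]
    abel
  rw [mseUplink, ← Complex.add_re, ← trace_add, hsq]
  congr 3
  abel

lemma le_mseUplink [DecidableEq m] {C : Matrix m m ℂ} (hC : C.PosDef) (G V : Matrix m n ℂ) :
    (1 - Gᴴ * C⁻¹ * G).trace.re ≤ mseUplink C G V := by
  rw [mseUplink_eq_of_isHermitian hC.isHermitian ((isUnit_iff_isUnit_det C).mp hC.isUnit) G V]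
  have := (hC.posSemidef.conjTranspose_mul_mul_same (V - C⁻¹ * G)).trace_nonneg
  linarith [(Complex.nonneg_iff.mp this).1]

lemma mseUplink_inv_mul [DecidableEq m] {C : Matrix m m ℂ} (hC : C.IsHermitian)
    (hdet : IsUnit C.det) (G : Matrix m n ℂ) :
    mseUplink C G (C⁻¹ * G) = (1 - Gᴴ * C⁻¹ * G).trace.re := by
  simp [mseUplink_eq_of_isHermitian hC hdet]

lemma mseUplink_add_smul_one [DecidableEq m] (A : Matrix m m ℂ) (c : ℝ) (G V : Matrix m n ℂ) :
    mseUplink (A + (c : ℂ) • 1) G V = mseUplink A G V + c * (Vᴴ * V).trace.re := by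
  simp only [mseUplink, Complex.coe_smul, Matrix.mul_add, Matrix.mul_smul, Matrix.mul_one,
    Matrix.add_mul, smul_mul, trace_sub, trace_add, trace_smul, Complex.real_smul, trace_one,
    Complex.sub_re, Complex.add_re, Complex.mul_re, Complex.ofReal_re, Complex.ofReal_im, zero_mul,
    sub_zero, Complex.natCast_re]
  ring

lemma re_trace_downlink_add_card (A : Matrix m m ℂ) (G B : Matrix m n ℂ) (α : ℝ) :
    ((α ^ 2 : ℝ) • (Bᴴ * mconj A * B) - α • (Gᵀ * B) - α • (Bᴴ * mconj G)).trace.re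
      + Fintype.card n = mseUplink A G (α • mconj B) := by
  rw [← re_trace_mconj]
  simp only [sq, mconj_sub, mconj_real_smul, mconj_mul, mconj_conjTranspose, mconj_mconj,
    mconj_transpose, trace_sub, trace_smul, Complex.real_smul, Complex.ofReal_mul, Complex.sub_re,
    Complex.mul_re, Complex.ofReal_re, Complex.ofReal_im, mul_zero, sub_zero, Complex.mul_im,
    zero_mul, add_zero, mseUplink, conjTranspose_smul, star_trivial, conjTranspose_mconj, smul_mul,
    Matrix.mul_smul, smul_smul, trace_add, trace_one, Complex.add_re, Complex.natCast_re]
  ring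

lemma re_trace_downlink_eq_mseUplink [DecidableEq m] (G B : Matrix m n ℂ) (R : Matrix m m ℂ)
    (ρ α : ℝ) :
    ((α ^ 2 : ℝ) • (Bᴴ * (mconj G * Gᵀ + mconj R) * B) - α • (Gᵀ * B)
        - α • (Bᴴ * mconj G)).trace.re + (α ^ 2 / ρ + 1) * Fintype.card n
      = mseUplink (G * Gᴴ + R + ((1 / ρ : ℝ) : ℂ) • 1) G (α • mconj B)
        + α ^ 2 / ρ * (Fintype.card n - (B * Bᴴ).trace.re) := by
  have hconj : mconj G * Gᵀ + mconj R = mconj (G * Gᴴ + R) := by simp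
  rw [hconj, mseUplink_add_smul_one, ← re_trace_downlink_add_card,
    re_trace_conjTranspose_mul_self_smul_mconj, trace_mul_comm Bᴴ]
  ring

end mse

/-- **Corollary 2 (UL–DL MMSE duality).** With `D = R̃ + (1/ρ) I`, `C = Ghat Ghatᴴ + D` and
`γ = √(trace (Ghatᴴ C⁻² Ghat)/K)`, the optimal uplink receiver `Wopt = (C⁻¹ Ghat)*` and the
optimal downlink precoder `Bopt = (1/γ)(C⁻¹ Ghat)*` satisfy `Bopt = Wopt / γ`, and the minimum
uplink MSE-SD equals the minimum downlink MSE-SD, both being `trace ((I + Ghatᴴ D⁻¹ Ghat)⁻¹)`. -/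
theorem ul_dl_mmse_duality
    {M K : ℕ} (hK : 1 ≤ K)
    (Ghat : Matrix (Fin M) (Fin K) ℂ) (hGhat : Ghat ≠ 0)
    (Rt : Matrix (Fin M) (Fin M) ℂ) (hRt : Rt.PosSemidef)
    (ρ : ℝ) (hρ : 0 < ρ)
    (D : Matrix (Fin M) (Fin M) ℂ) (hD : D = Rt + ((1 / ρ : ℝ) : ℂ) • 1)
    (C : Matrix (Fin M) (Fin M) ℂ) (hC : C = Ghat * Ghatᴴ + D)
    (γ : ℝ) (hγ : γ = Real.sqrt (((Ghatᴴ * C⁻¹ * C⁻¹ * Ghat).trace).re / K))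
    (Wopt : Matrix (Fin M) (Fin K) ℂ) (hWopt : Wopt = mconj (C⁻¹ * Ghat))
    (Bopt : Matrix (Fin M) (Fin K) ℂ) (hBopt : Bopt = γ⁻¹ • mconj (C⁻¹ * Ghat))
    (εu : Matrix (Fin M) (Fin K) ℂ → ℝ)
    (hεu : ∀ W, εu W =
      ((Wᵀ * C * mconj W + 1 - Wᵀ * Ghat - Ghatᴴ * mconj W).trace).re)
    (εd : Matrix (Fin M) (Fin K) ℂ → ℝ → ℝ)
    (hεd : ∀ B α, εd B α =
      (((α ^ 2 : ℝ) • (Bᴴ * (mconj Ghat * Ghatᵀ + mconj Rt) * B)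
        - α • (Ghatᵀ * B) - α • (Bᴴ * mconj Ghat)).trace).re + (α ^ 2 / ρ + 1) * K) :
    Bopt = γ⁻¹ • Wopt ∧
    IsLeast {x : ℝ | ∃ W : Matrix (Fin M) (Fin K) ℂ, x = εu W}
      (((1 + Ghatᴴ * D⁻¹ * Ghat)⁻¹).trace).re ∧
    IsLeast {x : ℝ | ∃ (B : Matrix (Fin M) (Fin K) ℂ) (α : ℝ),
        (B * Bᴴ).trace ≤ (K : ℂ) ∧ x = εd B α}
      (((1 + Ghatᴴ * D⁻¹ * Ghat)⁻¹).trace).re := by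
  have hKpos : (0 : ℝ) < K := by exact_mod_cast hK
  have hDpd : D.PosDef := hD ▸ PosDef.posSemidef_add hRt (PosDef.one.smul (by simpa using hρ))
  have hCpd : C.PosDef := hC ▸ PosDef.posSemidef_add (posSemidef_self_mul_conjTranspose Ghat) hDpd
  have hCdet : IsUnit C.det := (isUnit_iff_isUnit_det C).mp hCpd.isUnit
  have hmin : ((1 + Ghatᴴ * D⁻¹ * Ghat)⁻¹).trace.re = (1 - Ghatᴴ * C⁻¹ * Ghat).trace.re := by
    rw [inv_one_add_mul_inv_mul Ghatᴴ Ghat hDpd.isUnit (hC ▸ hCpd.isUnit), ← hC]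
  have hup (W) : εu W = mseUplink C Ghat (mconj W) := by
    rw [hεu, mseUplink, conjTranspose_mconj]
  have hdown (B α) :
      εd B α = mseUplink C Ghat (α • mconj B) + α ^ 2 / ρ * (K - (B * Bᴴ).trace.re) := by
    rw [hεd, hC, hD, ← add_assoc]
    simpa using re_trace_downlink_eq_mseUplink Ghat B Rt ρ α
  have hX : C⁻¹ * Ghat ≠ 0 := fun h => hGhat <| by
    rw [← mul_nonsing_inv_cancel_left C Ghat hCdet, h, Matrix.mul_zero]
  have hγX : γ = √(((C⁻¹ * Ghat)ᴴ * (C⁻¹ * Ghat)).trace.re / K) := by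
    rw [hγ, conjTranspose_mul, hCpd.isHermitian.inv.eq]; simp only [Matrix.mul_assoc]
  have hγpos : 0 < γ :=
    hγX ▸ Real.sqrt_pos.mpr (div_pos (re_trace_conjTranspose_mul_self_pos hX) hKpos)
  have hnorm : (Bopt * Boptᴴ).trace.re = K :=
    hBopt ▸ re_trace_mul_conjTranspose_of_normalized hX hKpos hγX
  refine ⟨by rw [hBopt, hWopt], ⟨⟨Wopt, ?_⟩, ?_⟩, ⟨⟨Bopt, γ, ?_, ?_⟩, ?_⟩⟩
  · rw [hup, hWopt, mconj_mconj, mseUplink_inv_mul hCpd.isHermitian hCdet, hmin]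
  · rintro _ ⟨W, rfl⟩
    exact hmin ▸ hup W ▸ le_mseUplink hCpd Ghat _
  · rw [trace_mul_conjTranspose_self_eq_ofReal, hnorm, Complex.ofReal_natCast]
  · rw [hdown, hnorm, sub_self, mul_zero, add_zero, hBopt, mconj_real_smul, mconj_mconj,
      smul_smul, mul_inv_cancel₀ hγpos.ne', one_smul, mseUplink_inv_mul hCpd.isHermitian hCdet,
      hmin]
  · rintro _ ⟨B, α, hBK, rfl⟩
    have hpower : 0 ≤ (K : ℝ) - (B * Bᴴ).trace.re :=
      sub_nonneg.mpr (by simpa using (Complex.le_def.mp hBK).1)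
    rw [hdown, hmin]
    exact le_add_of_le_of_nonneg (le_mseUplink hCpd Ghat _) (by positivity)
end
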